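/- Let f : [a,b] → ℝ be convex and differentiable with f' square-integrable, f(a)·f(b) > 0 and ∫_a^b f = 0. Then the geometric mean satisfies √(f(a)·f(b)) ≤ √((b-a)/12) · (∫_a^b (f'(x))² dx)^{1/2}. -/

import Mathlib

open MeasureTheory Set

/-! Integrating by parts against `x - (a + b) / 2` turns `∫ f = 0` into
`∫ f' (x) (x - (a + b) / 2) dx = (b - a) (f a + f b) / 2`, and Cauchy–Schwarz together with
`∫ (x - (a + b) / 2)² = (b - a)³ / 12` bounds the arithmetic mean `(f a + f b) / 2` by
`√((b - a) / 12) ‖f'‖₂`. Convexity keeps `f ≤ max (f a) (f b)` on `[a, b]`, so `∫ f = 0`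
forces both endpoint values to be positive, and AM–GM finishes. -/

theorem Real.sqrt_mul_le_half_add {x y : ℝ} (hx : 0 ≤ x) (hy : 0 ≤ y) :
    √(x * y) ≤ (x + y) / 2 :=
  Real.sqrt_le_iff.2 ⟨by positivity, by nlinarith [sq_nonneg (x - y)]⟩

theorem MeasureTheory.integral_mul_le_sqrt_mul_sqrt {α : Type*} [MeasurableSpace α]
    {μ : Measure α} {f g : α → ℝ} (hf : MemLp f 2 μ) (hg : MemLp g 2 μ) :
    ∫ x, f x * g x ∂μ ≤ √(∫ x, f x ^ 2 ∂μ) * √(∫ x, g x ^ 2 ∂μ) := by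
  have norm_rpow_two (y : ℝ) : ‖y‖ ^ (2 : ℝ) = y ^ 2 := by
    rw [Real.rpow_two, Real.norm_eq_abs, sq_abs]
  have holder := integral_mul_norm_le_Lp_mul_Lq Real.HolderConjugate.two_two
    (by simpa using hf) (by simpa using hg)
  simp only [norm_rpow_two, ← Real.sqrt_eq_rpow] at holder
  calc ∫ x, f x * g x ∂μ ≤ |∫ x, f x * g x ∂μ| := le_abs_self _
    _ ≤ ∫ x, ‖f x‖ * ‖g x‖ ∂μ := by
      simpa only [Real.norm_eq_abs, abs_mul] using
        abs_integral_le_integral_abs (f := fun x => f x * g x) (μ := μ)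
    _ ≤ _ := holder

theorem aestronglyMeasurable_of_hasDerivAt {μ : Measure ℝ} {f f' : ℝ → ℝ} {s : Set ℝ}
    (hs : MeasurableSet s) (hf : ∀ x ∈ s, HasDerivAt f (f' x) x) :
    AEStronglyMeasurable f' (μ.restrict s) :=
  (aestronglyMeasurable_deriv f _).congr <|
    ae_restrict_of_forall_mem hs fun x hx => (hf x hx).deriv

theorem memLp_two_of_intervalIntegrable_sq {f : ℝ → ℝ} {a b : ℝ} (hab : a ≤ b)
    (hf : AEStronglyMeasurable f (volume.restrict (Ioc a b)))
    (hf2 : IntervalIntegrable (fun x => f x ^ 2) volume a b) :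
    MemLp f 2 (volume.restrict (Ioc a b)) :=
  (memLp_two_iff_integrable_sq hf).2 ((intervalIntegrable_iff_integrableOn_Ioc_of_le hab).1 hf2)

theorem intervalIntegral.integral_mul_le_sqrt_mul_sqrt {f g : ℝ → ℝ} {a b : ℝ}
    (hab : a ≤ b)
    (hf : MemLp f 2 (volume.restrict (Ioc a b))) (hg : MemLp g 2 (volume.restrict (Ioc a b))) :
    ∫ x in a..b, f x * g x ≤ √(∫ x in a..b, f x ^ 2) * √(∫ x in a..b, g x ^ 2) := by
  simp only [intervalIntegral.integral_of_le hab]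
  exact MeasureTheory.integral_mul_le_sqrt_mul_sqrt hf hg

theorem integral_sub_midpoint_sq (a b : ℝ) :
    ∫ x in a..b, (x - (a + b) / 2) ^ 2 = (b - a) ^ 3 / 12 := by
  rw [intervalIntegral.integral_comp_sub_right (fun x => x ^ 2), integral_pow]
  ring

theorem integral_deriv_mul_sub_midpoint {f f' : ℝ → ℝ} {a b : ℝ}
    (hf : ∀ x ∈ uIcc a b, HasDerivAt f (f' x) x) (hf' : IntervalIntegrable f' volume a b) :
    ∫ x in a..b, f' x * (x - (a + b) / 2) = (b - a) / 2 * (f a + f b) - ∫ x in a..b, f x := by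
  have parts := intervalIntegral.integral_mul_deriv_eq_deriv_mul hf
    (fun x _ => (hasDerivAt_id x).sub_const ((a + b) / 2)) hf' intervalIntegrable_const
  simp only [mul_one, id] at parts
  linarith

theorem trapezoid_sub_integral_le {f f' : ℝ → ℝ} {a b : ℝ} (hab : a ≤ b)
    (hf : ∀ x ∈ Icc a b, HasDerivAt f (f' x) x)
    (hf'2 : IntervalIntegrable (fun x => f' x ^ 2) volume a b) :
    (b - a) / 2 * (f a + f b) - ∫ x in a..b, f x ≤
      √((b - a) ^ 3 / 12) * √(∫ x in a..b, f' x ^ 2) := by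
  have hf'L2 : MemLp f' 2 (volume.restrict (Ioc a b)) :=
    memLp_two_of_intervalIntegrable_sq hab (aestronglyMeasurable_of_hasDerivAt measurableSet_Ioc
      fun x hx => hf x (Ioc_subset_Icc_self hx)) hf'2
  have hf' : IntervalIntegrable f' volume a b :=
    (intervalIntegrable_iff_integrableOn_Ioc_of_le hab).2 (hf'L2.integrable one_le_two)
  have hmidL2 : MemLp (fun x => x - (a + b) / 2) 2 (volume.restrict (Ioc a b)) :=
    memLp_two_of_intervalIntegrable_sq hab (by fun_prop)
      (Continuous.intervalIntegrable (by fun_prop) a b)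
  rw [← integral_deriv_mul_sub_midpoint (by rwa [uIcc_of_le hab]) hf',
    ← integral_sub_midpoint_sq, mul_comm √_]
  exact intervalIntegral.integral_mul_le_sqrt_mul_sqrt hab hf'L2 hmidL2

theorem ConvexOn.integral_le_mul_max {f : ℝ → ℝ} {s : Set ℝ} {a b : ℝ}
    (hf : ConvexOn ℝ s f) (hab : a ≤ b) (hs : Icc a b ⊆ s)
    (hint : IntervalIntegrable f volume a b) :
    ∫ x in a..b, f x ≤ (b - a) * max (f a) (f b) := by
  have hle : ∀ x ∈ Icc a b, f x ≤ max (f a) (f b) := fun x hx =>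
    hf.le_on_segment (hs (left_mem_Icc.2 hab)) (hs (right_mem_Icc.2 hab))
      (by rwa [segment_eq_Icc hab])
  simpa using intervalIntegral.integral_mono_on hab hint intervalIntegrable_const hle

theorem alzer_geometric_mean (a b c d : ℝ) (hab : a < b) (hca : c < a) (hbd : b < d)
    (f f' : ℝ → ℝ)
    (hconv : ConvexOn ℝ (Set.Ioo c d) f)
    (hderiv : ∀ x ∈ Set.Ioo c d, HasDerivAt f (f' x) x)
    (hint2 : IntervalIntegrable (fun x => (f' x) ^ 2) volume a b)
    (hpos : f a * f b > 0)
    (hzero : (∫ t in a..b, f t) = 0) :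
    Real.sqrt (f a * f b) ≤
      Real.sqrt ((b - a) / 12) * (∫ x in a..b, (f' x) ^ 2) ^ ((1 : ℝ) / 2) := by
  have hsub : Icc a b ⊆ Ioo c d := Icc_subset_Ioo hca hbd
  have hderiv' : ∀ x ∈ Icc a b, HasDerivAt f (f' x) x := fun x hx => hderiv x (hsub hx)
  have hfint : IntervalIntegrable f volume a b :=
    ContinuousOn.intervalIntegrable_of_Icc hab.le fun x hx =>
      (hderiv' x hx).continuousAt.continuousWithinAt
  obtain ⟨hfa, hfb⟩ : 0 < f a ∧ 0 < f b := by
    refine (pos_and_pos_or_neg_and_neg_of_mul_pos hpos).resolve_right fun ⟨ha, hb⟩ => ?_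
    have hmax := hconv.integral_le_mul_max hab.le hsub hfint
    rw [hzero] at hmax
    exact (max_lt ha hb).not_ge (nonneg_of_mul_nonneg_right hmax (sub_pos.2 hab))
  have htrap := trapezoid_sub_integral_le hab.le hderiv' hint2
  rw [hzero, sub_zero, show (b - a) ^ 3 / 12 = (b - a) ^ 2 * ((b - a) / 12) by ring,
    Real.sqrt_mul (sq_nonneg _), Real.sqrt_sq (sub_pos.2 hab).le, mul_assoc,
    show (b - a) / 2 * (f a + f b) = (b - a) * ((f a + f b) / 2) by ring] at htrap
  rw [← Real.sqrt_eq_rpow]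
  calc √(f a * f b) ≤ (f a + f b) / 2 := Real.sqrt_mul_le_half_add hfa.le hfb.le
    _ ≤ √((b - a) / 12) * √(∫ x in a..b, f' x ^ 2) :=
      le_of_mul_le_mul_left htrap (sub_pos.2 hab)
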